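/- For every integer d ≥ 1 and every ε with 0 < ε < π²/2, the oscillation of the cost function c_ε over 𝕋^d × 𝕋^d satisfies sup_{x,y∈𝕋^d} c_ε(x,y) − inf_{x,y∈𝕋^d} c_ε(x,y) < 4π²·d; equivalently, ε·(sup_{x∈𝕋^d} log K_ε(x) − inf_{x∈𝕋^d} log K_ε(x)) < 4π²·d. -/

import Mathlib

open MeasureTheory Real

noncomputable section

instance : Fact ((0:ℝ) < 2 * Real.pi) := ⟨by positivity⟩

/-- The flat torus `𝕋^d = ℝ^d / (2πℤ)^d`, as a product of additive circles. -/
abbrev Torus (d : ℕ) : Type := Fin d → AddCircle (2 * Real.pi)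

namespace Torus

variable {d : ℕ}

/-- The canonical lift of a torus point to `ℝ^d` (componentwise representative in `[0, 2π)`). -/
noncomputable def lift (x : Torus d) : Fin d → ℝ :=
  fun i => (AddCircle.equivIco (2 * Real.pi) 0 (x i) : ℝ)

/-- The flat torus distance `dist(x,y) = min_{k ∈ ℤ^d} ‖x - y - 2πk‖` (Euclidean norm). -/
noncomputable def tdist (x y : Torus d) : ℝ :=
  ⨅ k : Fin d → ℤ, Real.sqrt (∑ i, (lift x i - lift y i - 2 * Real.pi * (k i)) ^ 2)

/-- The Gaussian (heat) kernel `K_ε` on the torus. -/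
noncomputable def gker (ε : ℝ) (x : Torus d) : ℝ :=
  (2 * Real.pi * ε) ^ (-(d : ℝ) / 2) *
    ∑' k : Fin d → ℤ,
      Real.exp (-(∑ i, (lift x i - 2 * Real.pi * (k i)) ^ 2) / (2 * ε))

/-- The cost function `c_ε(x,y) = -ε log K_ε(x - y)`. -/
noncomputable def cost (ε : ℝ) (x y : Torus d) : ℝ := -(ε * Real.log (gker ε (x - y)))

/-- The operator `𝒯_μ^ε[φ](y) = -ε log ∫ exp((φ(x) - c_ε(x,y))/ε) dμ(x)`. -/
noncomputable def Tmap (ε : ℝ) (μ : Measure (Torus d)) (φ : Torus d → ℝ) (y : Torus d) : ℝ :=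
  -(ε * Real.log (∫ x, Real.exp ((φ x - cost ε x y) / ε) ∂μ))

/-- The Schrödinger functional `I_{μ,ν}^ε[φ] = ∫ φ dμ + ∫ 𝒯_μ^ε[φ] dν`. -/
noncomputable def SchFun (ε : ℝ) (μ ν : Measure (Torus d)) (φ : Torus d → ℝ) : ℝ :=
  (∫ x, φ x ∂μ) + ∫ y, Tmap ε μ φ y ∂ν

/-- The Schrödinger functional `Ī_{μ,ν}^ε[ψ] = ∫ 𝒯_ν^ε[ψ] dμ + ∫ ψ dν`. -/
noncomputable def SchFunBar (ε : ℝ) (μ ν : Measure (Torus d)) (ψ : Torus d → ℝ) : ℝ :=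
  (∫ x, Tmap ε ν ψ x ∂μ) + ∫ y, ψ y ∂ν

/-- `(φ, ψ)` is a pair of Schrödinger potentials for `(μ, ν, ε)`. -/
structure IsSchrodingerPotentials (ε : ℝ) (μ ν : Measure (Torus d))
    (φ ψ : Torus d → ℝ) : Prop where
  cont_phi : Continuous φ
  cont_psi : Continuous ψ
  eq_psi : ψ = Tmap ε μ φ
  eq_phi : φ = Tmap ε ν ψ
  max_phi : ∀ g : Torus d → ℝ, Continuous g → SchFun ε μ ν g ≤ SchFun ε μ ν φ
  max_psi : ∀ g : Torus d → ℝ, Continuous g → SchFunBar ε μ ν g ≤ SchFunBar ε μ ν ψ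

/-- Variance of `f` under the probability measure `m`. -/
noncomputable def Var (m : Measure (Torus d)) (f : Torus d → ℝ) : ℝ :=
  ∫ x, (f x - ∫ y, f y ∂m) ^ 2 ∂m

/-- Oscillation `osc f = sup f - inf f`. -/
noncomputable def osc (f : Torus d → ℝ) : ℝ := (⨆ x, f x) - ⨅ x, f x

/-- `μ` has density `f` with respect to the Lebesgue (Haar) measure on the torus. -/
def HasDensity (μ : Measure (Torus d)) (f : Torus d → ℝ) : Prop :=
  μ = (volume : Measure (Torus d)).withDensity (fun x => ENNReal.ofReal (f x))

end Torus

open Torus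
namespace Torus

variable {d : ℕ}

/-- The probability measure `π_y[φ]`, with density
`exp((φ(x) - c_ε(x,y))/ε) / ∫ exp((φ(x') - c_ε(x',y))/ε) dμ(x')` with respect to `μ`. -/
noncomputable def piY (ε : ℝ) (μ : Measure (Torus d)) (φ : Torus d → ℝ) (y : Torus d) :
    Measure (Torus d) :=
  μ.withDensity fun x => ENNReal.ofReal
    (Real.exp ((φ x - cost ε x y) / ε) / ∫ x', Real.exp ((φ x' - cost ε x' y) / ε) ∂μ)

/-- The probability measure `π^ν[φ] : A ↦ ∫ π_y[φ](A) dν(y)`. -/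
noncomputable def piNu (ε : ℝ) (μ ν : Measure (Torus d)) (φ : Torus d → ℝ) :
    Measure (Torus d) :=
  ν.bind fun y => piY ε μ φ y

/-- The probability measure `γ_Q` on the torus, with density proportional to
`1_{B(x₀,r)}(x) exp(-dist(x₀,x)²/α)`. -/
noncomputable def gammaQ (x₀ : Torus d) (r α : ℝ) : Measure (Torus d) :=
  ((volume.withDensity fun x => ENNReal.ofReal
      (if tdist x₀ x < r then Real.exp (-(tdist x₀ x) ^ 2 / α) else 0)) Set.univ)⁻¹ •
    (volume.withDensity fun x => ENNReal.ofReal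
      (if tdist x₀ x < r then Real.exp (-(tdist x₀ x) ^ 2 / α) else 0))

/-- Normalized restriction `ν_Q(A) = ν(A ∩ Q) / ν(Q)`. -/
noncomputable def normRestrict (ν : Measure (Torus d)) (Q : Set (Torus d)) :
    Measure (Torus d) :=
  (ν Q)⁻¹ • ν.restrict Q

open Classical in
/-- Kullback–Leibler divergence: `KL(P‖Q) = ∫ log(dP/dQ) dP` if `P ≪ Q`, `+∞` otherwise. -/
noncomputable def KLdiv {α : Type*} [MeasurableSpace α] (P Q : Measure α) : EReal :=
  if P ≪ Q then ((∫ x, Real.log ((P.rnDeriv Q x).toReal) ∂P : ℝ) : EReal) else ⊤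

/-- Convolution with the Gaussian kernel: `(K_ε ∗ f)(x) = ∫ K_ε(x - y) f(y) dy`. -/
noncomputable def gconv (ε : ℝ) (f : Torus d → ℝ) (x : Torus d) : ℝ :=
  ∫ y, gker ε (x - y) * f y

/-- The measure `π_{μ,ε}` on `𝕋^d × 𝕋^d` given by `dπ_{μ,ε}(x,y) = K_ε(y - x) dy dμ(x)`. -/
noncomputable def piProd (ε : ℝ) (μ : Measure (Torus d)) : Measure (Torus d × Torus d) :=
  (μ.prod (volume : Measure (Torus d))).withDensity fun p =>
    ENNReal.ofReal (gker ε (p.2 - p.1))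

end Torus

/-! For a representative `x ∈ [0, 2π)^d` of a torus point and `2ε ≤ π²`, the `k`-th term of the
lattice sum defining `K_ε(x)` is at most `∏ᵢ 2·2^{-|kᵢ|}`, so the sum is at most `6^d`, while the
term of the lattice point nearest to `x` is at least `e^{-dπ²/2ε}`. Hence `log K_ε` oscillates by at
most `d log 6 + dπ²/2ε`, and `ε d log 6 + dπ²/2 < 4π²d` once `ε < π²/2`. The cost
`c_ε(x, y) = -ε log K_ε(x - y)` inherits the same bound. -/

open Finset

section ProdApply

variable {ι κ : Type*} [Fintype κ] {h : ι → ℝ}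

lemma sum_prod_apply_le_tsum_pow (h0 : 0 ≤ h) (hs : Summable h)
    (s : Finset (κ → ι)) : ∑ k ∈ s, ∏ i, h (k i) ≤ (∑' j, h j) ^ Fintype.card κ := by
  classical
  let t : κ → Finset ι := fun i => s.image (· i)
  calc ∑ k ∈ s, ∏ i, h (k i)
      ≤ ∑ k ∈ Fintype.piFinset t, ∏ i, h (k i) :=
        sum_le_sum_of_subset_of_nonneg
          (fun k hk => Fintype.mem_piFinset.2 fun i => mem_image_of_mem _ hk)
          (fun k _ _ => prod_nonneg fun i _ => h0 _)
    _ = ∏ i, ∑ j ∈ t i, h j := (prod_univ_sum t fun _ j => h j).symm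
    _ ≤ ∏ _i : κ, ∑' j, h j :=
        prod_le_prod (fun i _ => sum_nonneg fun j _ => h0 j)
          (fun i _ => hs.sum_le_tsum _ fun j _ => h0 j)
    _ = (∑' j, h j) ^ Fintype.card κ := prod_const _

lemma summable_prod_apply_of_nonneg (h0 : 0 ≤ h) (hs : Summable h) :
    Summable fun k : κ → ι => ∏ i, h (k i) :=
  summable_of_sum_le (fun _ => prod_nonneg fun _ _ => h0 _) (sum_prod_apply_le_tsum_pow h0 hs)

lemma tsum_prod_apply_le_pow (h0 : 0 ≤ h) (hs : Summable h) :
    ∑' k : κ → ι, ∏ i, h (k i) ≤ (∑' j, h j) ^ Fintype.card κ :=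
  Real.tsum_le_of_sum_le (fun _ => prod_nonneg fun _ _ => h0 _)
    (sum_prod_apply_le_tsum_pow h0 hs)

end ProdApply

lemma hasSum_two_mul_half_pow_natAbs :
    HasSum (fun m : ℤ => 2 * (1 / 2 : ℝ) ^ m.natAbs) 6 := by
  have hgeom : HasSum (fun n : ℕ => (1 / 2 : ℝ) ^ n) 2 := by
    simpa [one_div] using hasSum_geometric_two
  have hnonneg : HasSum (fun n : ℕ => 2 * (1 / 2 : ℝ) ^ (n : ℤ).natAbs) 4 := by
    simp only [Int.natAbs_natCast]
    rw [show (4 : ℝ) = 2 * 2 by norm_num]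
    exact hgeom.mul_left 2
  have hneg : HasSum (fun n : ℕ => 2 * (1 / 2 : ℝ) ^ (-((n : ℤ) + 1)).natAbs) 2 := by
    convert hgeom using 2 with n
    rw [show (-((n : ℤ) + 1)).natAbs = n + 1 by omega, pow_succ]
    ring
  rw [show (6 : ℝ) = 4 + 2 by norm_num]
  exact hnonneg.of_nat_of_neg_add_one hneg

lemma exp_neg_sq_div_le_two_mul_half_pow {ε v : ℝ} (hε : 0 < ε) (hεπ : 2 * ε ≤ π ^ 2)
    (hv : v ∈ Set.Ico 0 (2 * π)) (m : ℤ) :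
    exp (-(v - 2 * π * m) ^ 2 / (2 * ε)) ≤ 2 * (1 / 2 : ℝ) ^ m.natAbs := by
  rcases hn : m.natAbs with _ | n
  · rw [pow_zero, mul_one]
    refine (exp_le_one_iff.2 ?_).trans one_le_two
    exact div_nonpos_of_nonpos_of_nonneg (neg_nonpos.2 (sq_nonneg _)) (by positivity)
  have habs : |(m : ℝ)| = n + 1 := by
    rw [← Int.cast_abs, ← Int.natCast_natAbs, hn]
    push_cast
    ring
  have hdist : 2 * π * n ≤ |v - 2 * π * m| := by
    have := abs_sub_abs_le_abs_sub (2 * π * m) v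
    rw [abs_sub_comm, abs_mul, abs_of_pos (by positivity : (0 : ℝ) < 2 * π), habs,
      abs_of_nonneg hv.1] at this
    linarith [hv.2]
  have hnn : (n : ℝ) ≤ (n : ℝ) ^ 2 := by exact_mod_cast Nat.le_self_pow two_ne_zero n
  have hsq : 4 * π ^ 2 * n ≤ (v - 2 * π * m) ^ 2 :=
    calc 4 * π ^ 2 * n ≤ (2 * π * n) ^ 2 := by nlinarith [pi_pos]
      _ ≤ (v - 2 * π * m) ^ 2 := by
        rw [← sq_abs (v - _)]
        exact pow_le_pow_left₀ (by positivity) hdist 2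
  have hexp : -(v - 2 * π * m) ^ 2 / (2 * ε) ≤ n * (-4) := by
    rw [div_le_iff₀ (by positivity)]
    linarith [mul_le_mul_of_nonneg_right hεπ (Nat.cast_nonneg (α := ℝ) n)]
  have hexp4 : exp (-4) ≤ 1 / 2 := by
    rw [exp_neg, one_div]
    exact inv_anti₀ two_pos (by linarith [add_one_le_exp (4 : ℝ)])
  calc exp (-(v - 2 * π * m) ^ 2 / (2 * ε))
      ≤ exp (n * (-4)) := exp_le_exp.2 hexp
    _ = exp (-4) ^ n := by rw [exp_nat_mul]
    _ ≤ (1 / 2) ^ n := pow_le_pow_left₀ (exp_nonneg _) hexp4 n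
    _ = 2 * (1 / 2 : ℝ) ^ (n + 1) := by rw [pow_succ]; ring

lemma exists_int_sq_sub_le {v : ℝ} (hv : v ∈ Set.Ico 0 (2 * π)) :
    ∃ m : ℤ, (v - 2 * π * m) ^ 2 ≤ π ^ 2 := by
  by_cases h : v ≤ π
  · exact ⟨0, by simpa using sq_le_sq' (by linarith [pi_pos, hv.1]) h⟩
  · exact ⟨1, by simpa using sq_le_sq' (by linarith) (by linarith [hv.2])⟩

lemma ciSup_sub_ciInf_le_of_mem_Icc {α : Type*} [Nonempty α] {f : α → ℝ} {a b : ℝ}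
    (h : ∀ x, f x ∈ Set.Icc a b) : (⨆ x, f x) - ⨅ x, f x ≤ b - a :=
  sub_le_sub (ciSup_le fun x => (h x).2) (le_ciInf fun x => (h x).1)

namespace Torus

variable {d : ℕ}

def wrappedGaussSum (ε : ℝ) (v : Fin d → ℝ) : ℝ :=
  ∑' k : Fin d → ℤ, exp (-(∑ i, (v i - 2 * π * k i) ^ 2) / (2 * ε))

lemma gker_eq (ε : ℝ) (x : Torus d) :
    gker ε x = (2 * π * ε) ^ (-(d : ℝ) / 2) * wrappedGaussSum ε (lift x) := rfl

lemma lift_mem_Ico (x : Torus d) (i : Fin d) : lift x i ∈ Set.Ico 0 (2 * π) := by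
  obtain ⟨h0, h1⟩ := (AddCircle.equivIco (2 * π) 0 (x i)).2
  exact ⟨h0, h1.trans_eq (zero_add _)⟩

lemma exp_neg_sum_div_eq_prod (ε : ℝ) (v : Fin d → ℝ) (k : Fin d → ℤ) :
    exp (-(∑ i, (v i - 2 * π * k i) ^ 2) / (2 * ε)) =
      ∏ i, exp (-(v i - 2 * π * k i) ^ 2 / (2 * ε)) := by
  rw [← exp_sum, ← sum_div, sum_neg_distrib]

section

variable {ε : ℝ} {v : Fin d → ℝ}

lemma wrappedGauss_term_le (hε : 0 < ε) (hεπ : 2 * ε ≤ π ^ 2)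
    (hv : ∀ i, v i ∈ Set.Ico 0 (2 * π)) (k : Fin d → ℤ) :
    exp (-(∑ i, (v i - 2 * π * k i) ^ 2) / (2 * ε)) ≤
      ∏ i, 2 * (1 / 2 : ℝ) ^ (k i).natAbs := by
  rw [exp_neg_sum_div_eq_prod]
  exact prod_le_prod (fun i _ => (exp_pos _).le)
    fun i _ => exp_neg_sq_div_le_two_mul_half_pow hε hεπ (hv i) (k i)

lemma summable_wrappedGauss (hε : 0 < ε) (hεπ : 2 * ε ≤ π ^ 2)
    (hv : ∀ i, v i ∈ Set.Ico 0 (2 * π)) :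
    Summable fun k : Fin d → ℤ => exp (-(∑ i, (v i - 2 * π * k i) ^ 2) / (2 * ε)) := by
  have hprod := summable_prod_apply_of_nonneg (κ := Fin d) (fun m => by positivity)
    hasSum_two_mul_half_pow_natAbs.summable
  exact hprod.of_nonneg_of_le (fun _ => (exp_pos _).le) (wrappedGauss_term_le hε hεπ hv)

lemma wrappedGaussSum_le_six_pow (hε : 0 < ε) (hεπ : 2 * ε ≤ π ^ 2)
    (hv : ∀ i, v i ∈ Set.Ico 0 (2 * π)) : wrappedGaussSum ε v ≤ 6 ^ d := by
  have hmaj := hasSum_two_mul_half_pow_natAbs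
  have hprod := summable_prod_apply_of_nonneg (κ := Fin d) (fun m => by positivity)
    hmaj.summable
  calc wrappedGaussSum ε v
      ≤ ∑' k : Fin d → ℤ, ∏ i, 2 * (1 / 2 : ℝ) ^ (k i).natAbs :=
        (summable_wrappedGauss hε hεπ hv).tsum_le_tsum (wrappedGauss_term_le hε hεπ hv) hprod
    _ ≤ 6 ^ d := by
        have := tsum_prod_apply_le_pow (κ := Fin d) (fun m => by positivity) hmaj.summable
        rwa [hmaj.tsum_eq, Fintype.card_fin] at this

lemma exp_le_wrappedGaussSum (hε : 0 < ε) (hεπ : 2 * ε ≤ π ^ 2)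
    (hv : ∀ i, v i ∈ Set.Ico 0 (2 * π)) :
    exp (-(d * π ^ 2) / (2 * ε)) ≤ wrappedGaussSum ε v := by
  choose k hk using fun i => exists_int_sq_sub_le (hv i)
  have hsq : ∑ i, (v i - 2 * π * k i) ^ 2 ≤ d * π ^ 2 := by
    simpa using sum_le_sum fun i (_ : i ∈ univ) => hk i
  calc exp (-(d * π ^ 2) / (2 * ε))
      ≤ exp (-(∑ i, (v i - 2 * π * k i) ^ 2) / (2 * ε)) := by gcongr
    _ ≤ wrappedGaussSum ε v :=
        (summable_wrappedGauss hε hεπ hv).le_tsum k fun _ _ => (exp_pos _).le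

lemma log_gker_mem_Icc (hε : 0 < ε) (hεπ : 2 * ε ≤ π ^ 2) (x : Torus d) :
    log (gker ε x) ∈ Set.Icc (log ((2 * π * ε) ^ (-(d : ℝ) / 2)) - d * π ^ 2 / (2 * ε))
      (log ((2 * π * ε) ^ (-(d : ℝ) / 2)) + d * log 6) := by
  have hlower := exp_le_wrappedGaussSum hε hεπ (lift_mem_Ico x)
  have hupper := wrappedGaussSum_le_six_pow hε hεπ (lift_mem_Ico x)
  have hpos := (exp_pos _).trans_le hlower
  rw [gker_eq, log_mul (by positivity) hpos.ne']
  constructor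
  · have := log_le_log (exp_pos _) hlower
    rw [log_exp, neg_div] at this
    linarith
  · have := log_le_log hpos hupper
    rw [log_pow] at this
    linarith

end

end Torus

/-- oscillation of the cost: for `0 < ε < π²/2`,
`osc(c_ε) < 4π²d`, i.e. `sup c_ε - inf c_ε < 4π²d`; equivalently
`ε·(sup log K_ε - inf log K_ε) < 4π²d`. -/
theorem statement14 (d : ℕ) (hd : 1 ≤ d) (ε : ℝ) (hε0 : 0 < ε) (hε : ε < Real.pi ^ 2 / 2) :
    ((⨆ p : Torus d × Torus d, cost ε p.1 p.2) -
        (⨅ p : Torus d × Torus d, cost ε p.1 p.2) < 4 * Real.pi ^ 2 * d) ∧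
      ε * ((⨆ x : Torus d, Real.log (gker ε x)) - ⨅ x : Torus d, Real.log (gker ε x)) <
        4 * Real.pi ^ 2 * d := by
  set c := log ((2 * π * ε) ^ (-(d : ℝ) / 2))
  have hlog : ∀ x : Torus d, log (gker ε x) ∈
      Set.Icc (c - d * π ^ 2 / (2 * ε)) (c + d * log 6) :=
    log_gker_mem_Icc hε0 (by linarith)
  have hwidth : ε * (c + d * log 6 - (c - d * π ^ 2 / (2 * ε))) < 4 * π ^ 2 * d := by
    have hlog6 : 0 < log 6 ∧ log 6 ≤ 5 :=
      ⟨log_pos (by norm_num), by linarith [log_le_sub_one_of_pos (by norm_num : (0 : ℝ) < 6)]⟩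
    have : ε * (c + d * log 6 - (c - d * π ^ 2 / (2 * ε))) = ε * d * log 6 + d * π ^ 2 / 2 := by
      field_simp
      ring
    rw [this]
    have hd0 : (0 : ℝ) < d := Nat.cast_pos.2 hd
    have := mul_lt_mul_of_pos_right hε (mul_pos hd0 hlog6.1)
    have := mul_le_mul_of_nonneg_left (mul_le_mul_of_nonneg_left hlog6.2 hd0.le)
      (by positivity : (0 : ℝ) ≤ π ^ 2 / 2)
    nlinarith [pi_pos]
  constructor
  · calc (⨆ p : Torus d × Torus d, cost ε p.1 p.2) - ⨅ p : Torus d × Torus d, cost ε p.1 p.2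
        ≤ -(ε * (c - d * π ^ 2 / (2 * ε))) - -(ε * (c + d * log 6)) :=
          ciSup_sub_ciInf_le_of_mem_Icc fun p =>
            ⟨neg_le_neg (mul_le_mul_of_nonneg_left (hlog _).2 hε0.le),
              neg_le_neg (mul_le_mul_of_nonneg_left (hlog _).1 hε0.le)⟩
      _ = ε * (c + d * log 6 - (c - d * π ^ 2 / (2 * ε))) := by ring
      _ < 4 * π ^ 2 * d := hwidth
  · exact (mul_le_mul_of_nonneg_left (ciSup_sub_ciInf_le_of_mem_Icc hlog) hε0.le).trans_lt hwidth
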